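/- arXiv:2408.00920 — 2 statements merged into one kernel-verified Lean document; each statement's English description precedes it below -/
import Mathlib

section
/- (Proposition 3.3) Let (Ω, P) be a probability space, d ≥ 1, H > 0, and let A be a symmetric d×d real matrix satisfying vᵀAv ≥ m‖v‖² for all v ∈ ℝᵈ for some m > 0, and whose operator norm satisfies ‖A‖ ≤ H (so A is invertible). Let (X_t)_{t≥1} be an independent sequence of measurable random d×d matrices with each X_t almost surely bounded in operator norm by H and with entrywise expectation E[X_t] = A. Define the random matrices T_0 := I (constant) and T_t(ω) := I + (I − X_t(ω)/H)·T_{t−1}(ω) for t ≥ 1. Then the entrywise expectations satisfy E[T_s]/H → A⁻¹ as s → ∞ (in any matrix norm). -/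
open MeasureTheory ProbabilityTheory Filter
open scoped Matrix

/-- Matrices inherit the product measurable structure from functions. -/
instance matrixMeasurableSpace {m n α : Type*} [MeasurableSpace α] :
    MeasurableSpace (Matrix m n α) :=
  (inferInstance : MeasurableSpace (m → n → α))

/-!
`X t` is independent of `T t`, which is a measurable function of `X 0, …, X (t - 1)`, so taking
expectations in the recursion gives `E[T (t + 1)] = 1 + B * E[T t]` with `B = 1 - A / H`, hence
`E[T s] = ∑_{k ≤ s} B ^ k`. Since `m ≤ ⟪A x, x⟫ / ‖x‖² ≤ H` and `A` is symmetric, `B` is symmetric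
with `0 ≤ ⟪B x, x⟫ / ‖x‖² ≤ 1 - m / H`, so `‖B‖ < 1` and the Neumann series converges to
`(1 - B)⁻¹ = H • A⁻¹`.
-/

open scoped RealInnerProductSpace Matrix.Norms.L2Operator

section Contraction

variable {E : Type*} [NormedAddCommGroup E] [InnerProductSpace ℝ E]

theorem ContinuousLinearMap.norm_le_of_abs_inner_self_le {T : E →L[ℝ] E}
    (hT : (T : E →ₗ[ℝ] E).IsSymmetric) {c : ℝ} (hc : 0 ≤ c)
    (h : ∀ x, |⟪T x, x⟫| ≤ c * ‖x‖ ^ 2) : ‖T‖ ≤ c := by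
  rw [T.norm_eq_iSup_rayleighQuotient hT]
  refine ciSup_le fun x => ?_
  rw [rayleighQuotient, reApplyInnerSelf_apply, RCLike.re_to_real, abs_div, abs_sq]
  exact div_le_of_le_mul₀ (by positivity) hc (h x)

theorem ContinuousLinearMap.inner_self_le_norm_mul_norm_sq (T : E →L[ℝ] E) (x : E) :
    ⟪T x, x⟫ ≤ ‖T‖ * ‖x‖ ^ 2 := calc
  ⟪T x, x⟫ ≤ ‖T x‖ * ‖x‖ := real_inner_le_norm _ _
  _ ≤ ‖T‖ * ‖x‖ * ‖x‖ := by gcongr; exact T.le_opNorm x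
  _ = ‖T‖ * ‖x‖ ^ 2 := by ring

theorem ContinuousLinearMap.le_norm_of_le_inner_self [Nontrivial E] {T : E →L[ℝ] E} {m : ℝ}
    (hm : ∀ x, m * ‖x‖ ^ 2 ≤ ⟪T x, x⟫) : m ≤ ‖T‖ := by
  obtain ⟨x, hx⟩ := exists_ne (0 : E)
  exact le_of_mul_le_mul_right ((hm x).trans (T.inner_self_le_norm_mul_norm_sq x))
    (by positivity)

theorem ContinuousLinearMap.norm_one_sub_inv_smul_le {T : E →L[ℝ] E}
    (hT : (T : E →ₗ[ℝ] E).IsSymmetric) {m H : ℝ} (hH : 0 < H) (hmH : m ≤ H) (hTH : ‖T‖ ≤ H)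
    (hm : ∀ x, m * ‖x‖ ^ 2 ≤ ⟪T x, x⟫) : ‖1 - H⁻¹ • T‖ ≤ 1 - m / H := by
  have hsymm : ((1 - H⁻¹ • T : E →L[ℝ] E) : E →ₗ[ℝ] E).IsSymmetric := by
    simpa [Module.End.one_eq_id] using LinearMap.IsSymmetric.id.sub (hT.smul (c := H⁻¹) (by simp))
  have hc : 0 ≤ 1 - m / H := sub_nonneg.2 ((div_le_one hH).2 hmH)
  refine norm_le_of_abs_inner_self_le hsymm hc fun x => ?_
  have hupper : H⁻¹ * ⟪T x, x⟫ ≤ ‖x‖ ^ 2 := by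
    rw [inv_mul_le_iff₀ hH]
    exact (T.inner_self_le_norm_mul_norm_sq x).trans (by gcongr)
  have hlower : m / H * ‖x‖ ^ 2 ≤ H⁻¹ * ⟪T x, x⟫ := by
    rw [div_mul_eq_mul_div, div_eq_inv_mul]
    gcongr
    exact hm x
  have hinner : ⟪(1 - H⁻¹ • T) x, x⟫ = ‖x‖ ^ 2 - H⁻¹ * ⟪T x, x⟫ := by
    simp [inner_sub_left, inner_smul_left]
  rw [hinner, abs_le]
  constructor <;> nlinarith [mul_nonneg hc (sq_nonneg ‖x‖)]

end Contraction

section MatrixNorm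

theorem Matrix.norm_apply_le_l2_opNorm {𝕜 m n : Type*} [RCLike 𝕜] [Fintype m] [Fintype n]
    [DecidableEq n] (M : Matrix m n 𝕜) (i : m) (j : n) : ‖M i j‖ ≤ ‖M‖ := by
  have h := M.l2_opNorm_mulVec (EuclideanSpace.single j 1)
  rw [PiLp.norm_single, norm_one, mul_one] at h
  refine le_trans (le_of_eq ?_) ((PiLp.norm_apply_le _ i).trans h)
  simp [Matrix.mulVec_single]

theorem Matrix.inv_eq_smul_ringInverse_smul {n α : Type*} [Fintype n] [DecidableEq n]
    [CommRing α] {A : Matrix n n α} {c : α} (h : IsUnit (c • A)) :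
    A⁻¹ = c • Ring.inverse (c • A) :=
  inv_eq_right_inv (by rw [mul_smul_comm, ← smul_mul_assoc, Ring.mul_inverse_cancel _ h])

variable {n : Type*} [Fintype n] [DecidableEq n]

theorem Matrix.l2_opNorm_one_sub_inv_smul_le [Nonempty n] {A : Matrix n n ℝ} (hA : A.IsSymm)
    {m H : ℝ} (hH : 0 < H) (hAH : ‖A‖ ≤ H) (hm : ∀ v, m * (v ⬝ᵥ v) ≤ v ⬝ᵥ A *ᵥ v) :
    ‖1 - H⁻¹ • A‖ ≤ 1 - m / H := by
  set T := toEuclideanCLM (𝕜 := ℝ) (n := n) A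
  have hT : (T : EuclideanSpace ℝ n →ₗ[ℝ] EuclideanSpace ℝ n).IsSymmetric := by
    rw [coe_toEuclideanCLM_eq_toEuclideanLin, isSymmetric_toEuclideanLin_iff]
    exact (conjTranspose_eq_transpose_of_trivial A).trans hA
  have hmT : ∀ x, m * ‖x‖ ^ 2 ≤ ⟪T x, x⟫ := fun x => by
    rw [← real_inner_self_eq_norm_sq, EuclideanSpace.inner_eq_star_dotProduct, star_trivial,
      real_inner_comm, inner_toEuclideanCLM]
    exact hm x
  rw [← l2_opNorm_toEuclideanCLM, map_sub, map_one, map_smul]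
  exact T.norm_one_sub_inv_smul_le hT hH ((T.le_norm_of_le_inner_self hmT).trans hAH) hAH hmT

end MatrixNorm

theorem tendsto_ringInverse_one_sub_of_recursion {R : Type*} [NormedRing R]
    [HasSummableGeomSeries R] {b : R} (hb : ‖b‖ < 1) {M : ℕ → R} (h0 : M 0 = 1)
    (hsucc : ∀ t, M (t + 1) = 1 + b * M t) : Tendsto M atTop (nhds (Ring.inverse (1 - b))) := by
  have hgeom : ∀ t, M t = ∑ k ∈ Finset.range (t + 1), b ^ k := by
    intro t
    induction t with
    | zero => simp [h0]
    | succ t ih => rw [hsucc, ih, add_comm, ← geom_sum_succ]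
  rw [funext hgeom]
  exact (hasSum_geom_series_inverse b hb).tendsto_sum_nat.comp (tendsto_add_atTop_nat 1)

section Measurability

variable {α β m n : Type*} [MeasurableSpace α] [MeasurableSpace β]

theorem Measurable.matrix_apply {f : α → Matrix m n β} (hf : Measurable f) (i : m) (j : n) :
    Measurable fun a => f a i j :=
  (measurable_pi_apply j).comp ((measurable_pi_apply i).comp hf)

theorem Matrix.measurable_of_apply {f : α → Matrix m n β}
    (h : ∀ i j, Measurable fun a => f a i j) : Measurable f :=
  measurable_pi_lambda _ fun i => measurable_pi_lambda _ fun j => h i j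

theorem measurable_lissaStep [Fintype n] [DecidableEq n] (c : ℝ) :
    Measurable fun p : Matrix n n ℝ × Matrix n n ℝ => 1 + (1 - c • p.1) * p.2 := by
  refine Matrix.measurable_of_apply fun i j => ?_
  simp only [Matrix.add_apply, Matrix.mul_apply, Matrix.sub_apply, Matrix.smul_apply, smul_eq_mul]
  exact measurable_const.add <| Finset.measurable_sum _ fun k _ =>
    (measurable_const.sub ((measurable_fst.matrix_apply i k).const_mul c)).mul
      (measurable_snd.matrix_apply k j)

end Measurability

section Independence

variable {Ω ι β γ : Type*} [mβ : MeasurableSpace β] [MeasurableSpace γ]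

theorem measurable_iSup_lt_of_recursion {X : ℕ → Ω → β} {T : ℕ → Ω → γ} {F : β → γ → γ}
    (hF : Measurable (Function.uncurry F)) {c : γ} (hT0 : ∀ ω, T 0 ω = c)
    (hT : ∀ t ω, T (t + 1) ω = F (X t ω) (T t ω)) (t : ℕ) :
    Measurable[⨆ s < t, mβ.comap (X s)] (T t) := by
  induction t with
  | zero => exact funext hT0 ▸ measurable_const
  | succ t ih =>
    have hXt : Measurable[⨆ s < t + 1, mβ.comap (X s)] (X t) :=
      (comap_measurable (X t)).mono (le_iSup₂ (f := fun s (_ : s < t + 1) => mβ.comap (X s)) t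
        t.lt_succ_self) le_rfl
    have hTt : Measurable[⨆ s < t + 1, mβ.comap (X s)] (T t) :=
      ih.mono (biSup_mono fun s hs => hs.trans t.lt_succ_self) le_rfl
    exact funext (hT t) ▸ hF.comp (hXt.prodMk hTt)

variable [MeasurableSpace Ω] {P : Measure Ω}

theorem ProbabilityTheory.iIndepFun.indepFun_of_measurable_iSup_lt [Preorder ι]
    {X : ι → Ω → β} (hX : iIndepFun X P) (hmeas : ∀ i, Measurable (X i)) {i : ι} {Y : Ω → γ}
    (hY : Measurable[⨆ j < i, mβ.comap (X j)] Y) : IndepFun (X i) Y P := by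
  have h := indep_iSup_of_disjoint (fun j => (hmeas j).comap_le)
    ((iIndepFun_iff_iIndep _ _ _).1 hX) (S := {i}) (T := Set.Iio i) (by simp)
  rw [IndepFun_iff_Indep]
  exact indep_of_indep_of_le h (le_biSup (fun j => mβ.comap (X j)) (Set.mem_singleton i))
    hY.comap_le

end Independence

section MatrixMean

variable {Ω m n l : Type*} [MeasurableSpace Ω] {P : Measure Ω}

noncomputable def matrixMean (P : Measure Ω) (Y : Ω → Matrix m n ℝ) : Matrix m n ℝ :=
  Matrix.of fun i j => ∫ ω, Y ω i j ∂P

theorem matrixMean_const [IsProbabilityMeasure P] (M : Matrix m n ℝ) :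
    matrixMean P (fun _ => M) = M := by
  ext i j
  simp [matrixMean]

theorem matrixMean_add {Y Z : Ω → Matrix m n ℝ} (hY : ∀ i j, Integrable (fun ω => Y ω i j) P)
    (hZ : ∀ i j, Integrable (fun ω => Z ω i j) P) :
    matrixMean P (fun ω => Y ω + Z ω) = matrixMean P Y + matrixMean P Z := by
  ext i j
  exact integral_add (hY i j) (hZ i j)

theorem matrixMean_sub {Y Z : Ω → Matrix m n ℝ} (hY : ∀ i j, Integrable (fun ω => Y ω i j) P)
    (hZ : ∀ i j, Integrable (fun ω => Z ω i j) P) :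
    matrixMean P (fun ω => Y ω - Z ω) = matrixMean P Y - matrixMean P Z := by
  ext i j
  exact integral_sub (hY i j) (hZ i j)

theorem matrixMean_smul (c : ℝ) (Y : Ω → Matrix m n ℝ) :
    matrixMean P (fun ω => c • Y ω) = c • matrixMean P Y := by
  ext i j
  exact integral_const_mul c _

theorem integrable_apply_of_ae_l2_opNorm_le [Fintype m] [Fintype n] [DecidableEq n]
    [IsFiniteMeasure P] {Y : Ω → Matrix m n ℝ} (hY : Measurable Y) {C : ℝ} (hC : ∀ᵐ ω ∂P, ‖Y ω‖ ≤ C) (i : m) (j : n) :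
    Integrable (fun ω => Y ω i j) P :=
  .of_bound (hY.matrix_apply i j).aestronglyMeasurable C
    (hC.mono fun _ h => (Matrix.norm_apply_le_l2_opNorm _ i j).trans h)

variable {X : Ω → Matrix m n ℝ} {Y : Ω → Matrix n l ℝ}

theorem ProbabilityTheory.IndepFun.matrix_apply (hXY : IndepFun X Y P) (i : m) (k : n) (j : l) :
    IndepFun (fun ω => X ω i k) (fun ω => Y ω k j) P :=
  hXY.comp (measurable_id.matrix_apply i k) (measurable_id.matrix_apply k j)

variable [Fintype n]

theorem ProbabilityTheory.IndepFun.integrable_matrix_mul_apply (hXY : IndepFun X Y P)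
    (hX : ∀ i j, Integrable (fun ω => X ω i j) P) (hY : ∀ i j, Integrable (fun ω => Y ω i j) P)
    (i : m) (j : l) : Integrable (fun ω => (X ω * Y ω) i j) P :=
  integrable_finsetSum _ fun k _ => (hXY.matrix_apply i k j).integrable_mul (hX i k) (hY k j)

theorem ProbabilityTheory.IndepFun.matrixMean_mul (hXY : IndepFun X Y P)
    (hX : ∀ i j, Integrable (fun ω => X ω i j) P) (hY : ∀ i j, Integrable (fun ω => Y ω i j) P) :
    matrixMean P (fun ω => X ω * Y ω) = matrixMean P X * matrixMean P Y := by
  ext i j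
  simp only [matrixMean, Matrix.of_apply, Matrix.mul_apply]
  refine (integral_finsetSum _ fun k _ =>
    (hXY.matrix_apply i k j).integrable_mul (hX i k) (hY k j)).trans ?_
  exact Finset.sum_congr rfl fun k _ =>
    (hXY.matrix_apply i k j).integral_mul_eq_mul_integral (hX i k).1 (hY k j).1

end MatrixMean

section Lissa

variable {Ω n : Type*} [MeasurableSpace Ω] {P : Measure Ω} [Fintype n] [DecidableEq n]

theorem lissaStep_eq (c : ℝ) (x y : Matrix n n ℝ) :
    1 + (1 - c • x) * y = 1 + (y - c • (x * y)) := by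
  rw [sub_mul, one_mul, smul_mul_assoc]

variable {X Y : Ω → Matrix n n ℝ}

theorem ProbabilityTheory.IndepFun.integrable_lissaStep_apply [IsFiniteMeasure P]
    (hXY : IndepFun X Y P) (hX : ∀ i j, Integrable (fun ω => X ω i j) P)
    (hY : ∀ i j, Integrable (fun ω => Y ω i j) P) (c : ℝ) (i j : n) :
    Integrable (fun ω => (1 + (1 - c • X ω) * Y ω) i j) P := by
  have h : (fun ω => (1 + (1 - c • X ω) * Y ω) i j)
      = fun ω => (1 : Matrix n n ℝ) i j + (Y ω i j - c * (X ω * Y ω) i j) :=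
    funext fun ω => by rw [lissaStep_eq]; rfl
  rw [h]
  exact (integrable_const _).add
    ((hY i j).sub ((hXY.integrable_matrix_mul_apply hX hY i j).const_mul c))

theorem ProbabilityTheory.IndepFun.matrixMean_lissaStep [IsProbabilityMeasure P]
    (hXY : IndepFun X Y P) (hX : ∀ i j, Integrable (fun ω => X ω i j) P)
    (hY : ∀ i j, Integrable (fun ω => Y ω i j) P) (c : ℝ) :
    matrixMean P (fun ω => 1 + (1 - c • X ω) * Y ω)
      = 1 + (1 - c • matrixMean P X) * matrixMean P Y := by
  have hXY' : ∀ i j, Integrable (fun ω => (c • (X ω * Y ω)) i j) P := fun i j =>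
    (hXY.integrable_matrix_mul_apply hX hY i j).const_mul c
  simp only [lissaStep_eq]
  rw [matrixMean_add (Y := fun _ => 1) (Z := fun ω => Y ω - c • (X ω * Y ω))
      (fun _ _ => integrable_const _)
      fun i j => (hY i j).sub (hXY' i j), matrixMean_const, matrixMean_sub hY hXY',
    matrixMean_smul, hXY.matrixMean_mul hX hY]

variable {H : ℝ} {X T : ℕ → Ω → Matrix n n ℝ} (hT0 : ∀ ω, T 0 ω = 1)
  (hTrec : ∀ t ω, T (t + 1) ω = 1 + (1 - H⁻¹ • X t ω) * T t ω)
include hT0 hTrec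

theorem lissa_indepFun (hX : iIndepFun X P) (hmeas : ∀ t, Measurable (X t)) (t : ℕ) :
    IndepFun (X t) (T t) P :=
  hX.indepFun_of_measurable_iSup_lt hmeas <|
    measurable_iSup_lt_of_recursion (F := fun x y => 1 + (1 - H⁻¹ • x) * y)
      (measurable_lissaStep H⁻¹) hT0 hTrec t

theorem lissa_integrable [IsFiniteMeasure P] (hindep : ∀ t, IndepFun (X t) (T t) P)
    (hX : ∀ t i j, Integrable (fun ω => X t ω i j) P) (t : ℕ) (i j : n) :
    Integrable (fun ω => T t ω i j) P := by
  induction t generalizing i j with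
  | zero => simp only [hT0]; exact integrable_const _
  | succ t ih => simp only [hTrec]; exact (hindep t).integrable_lissaStep_apply (hX t) ih _ i j

theorem tendsto_matrixMean_lissa [IsProbabilityMeasure P] (hindep : ∀ t, IndepFun (X t) (T t) P)
    (hX : ∀ t i j, Integrable (fun ω => X t ω i j) P) {A : Matrix n n ℝ}
    (hmean : ∀ t, matrixMean P (X t) = A) (hA : ‖1 - H⁻¹ • A‖ < 1) :
    Tendsto (fun s => matrixMean P (T s)) atTop (nhds (Ring.inverse (H⁻¹ • A))) := by
  rw [← sub_sub_cancel 1 (H⁻¹ • A)]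
  refine tendsto_ringInverse_one_sub_of_recursion hA ?_ fun t => ?_
  · rw [funext hT0]
    exact matrixMean_const 1
  · rw [funext (hTrec t), (hindep t).matrixMean_lissaStep (hX t)
      (lissa_integrable hT0 hTrec hindep hX t), hmean]

end Lissa

/-- (Proposition 3.3) Let `A` be a symmetric positive-definite `d × d` real matrix with
`vᵀAv ≥ m‖v‖²` (`m > 0`) and ℓ²-operator norm at most `H`.  Let `(X t)` be an independent
sequence of measurable random matrices, almost surely bounded by `H` in operator norm,
with entrywise mean `A`.  Then the LiSSA recursion `T 0 = I`,
`T (t+1) = I + (I − X t / H) * T t` satisfies `E[T s] / H → A⁻¹` as `s → ∞`.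
(Here `X t` plays the role of the paper's `X_{t+1}`.) -/
theorem lissa_inverse_hessian_asymptotically_unbiased
    {Ω : Type*} [MeasurableSpace Ω] (P : Measure Ω) [IsProbabilityMeasure P]
    (d : ℕ) (hd : 1 ≤ d) (Hbd m : ℝ) (hH : 0 < Hbd) (hm : 0 < m)
    (A : Matrix (Fin d) (Fin d) ℝ)
    (hsymm : A.IsSymm)
    (hpos : ∀ v : Fin d → ℝ, m * (v ⬝ᵥ v) ≤ v ⬝ᵥ A.mulVec v)
    (hAnorm : ‖Matrix.toEuclideanCLM (𝕜 := ℝ) A‖ ≤ Hbd)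
    (X : ℕ → Ω → Matrix (Fin d) (Fin d) ℝ)
    (hmeas : ∀ t, Measurable (X t))
    (hindep : iIndepFun X P)
    (hbdd : ∀ t, ∀ᵐ ω ∂P, ‖Matrix.toEuclideanCLM (𝕜 := ℝ) (X t ω)‖ ≤ Hbd)
    (hmean : ∀ t i j, ∫ ω, X t ω i j ∂P = A i j)
    (T : ℕ → Ω → Matrix (Fin d) (Fin d) ℝ)
    (hT0 : ∀ ω, T 0 ω = 1)
    (hTrec : ∀ t ω, T (t + 1) ω = 1 + (1 - Hbd⁻¹ • X t ω) * T t ω) :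
    Tendsto (fun s => Hbd⁻¹ • Matrix.of fun i j => ∫ ω, T s ω i j ∂P)
      atTop (nhds A⁻¹) := by
  have : Nonempty (Fin d) := ⟨⟨0, hd⟩⟩
  have hcontract : ‖1 - Hbd⁻¹ • A‖ < 1 :=
    (Matrix.l2_opNorm_one_sub_inv_smul_le hsymm hH hAnorm hpos).trans_lt
      (sub_lt_self 1 (div_pos hm hH))
  have hXint t := integrable_apply_of_ae_l2_opNorm_le (hmeas t) (hbdd t)
  have hlim := tendsto_matrixMean_lissa hT0 hTrec (lissa_indepFun hT0 hTrec hindep hmeas) hXint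
    (fun t => Matrix.ext (hmean t)) hcontract
  rw [Matrix.inv_eq_smul_ringInverse_smul (c := Hbd⁻¹)]
  · exact hlim.const_smul Hbd⁻¹
  · simpa using isUnit_one_sub_of_norm_lt_one hcontract
end

section
/- (Theorem 2 / Gaussian mechanism) Fix d ≥ 1 and let E = EuclideanSpace ℝ (Fin d). For a mean m ∈ E and σ > 0, let μ_m denote the Gaussian measure on E with mean m and covariance σ²·I, i.e. the pushforward under the canonical measurable equivalence (Fin d → ℝ) ≃ E of the product measure ⨂_{i} gaussianReal (m i) σ². Let w̃, w̃* ∈ E with ‖w̃ − w̃*‖ ≤ Δ for some Δ > 0, let 0 < ε < 1 and 0 < δ < 1, and suppose σ ≥ (Δ/ε)·√(2·ln(1.25/δ)). Then for every measurable set T ⊆ E, both μ_{w̃}(T) ≤ exp(ε)·μ_{w̃*}(T) + δ and μ_{w̃*}(T) ≤ exp(ε)·μ_{w̃}(T) + δ. -/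
/-!
`N(a, σ²I)` has density `exp L` with respect to `N(b, σ²I)`, where the privacy loss is
`L x = (⟪a - b, x - a⟫ + ‖a - b‖² / 2) / σ²`. On `{L ≤ ε}` the density is at most `e^ε`, so
`N(a, σ²I) T ≤ e^ε N(b, σ²I) T + N(a, σ²I) {L > ε}`. Under `N(a, σ²I)` the statistic
`⟪a - b, x - a⟫` is `N(0, ρ²σ²)` with `ρ = ‖a - b‖`, so `{L > ε}` has the probability that a
standard Gaussian exceeds `εσ/ρ - ρ/(2σ) ≥ c - 1/(2c)`, where `c = √(2 log (1.25/δ))`; this tail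
is at most `δ`, by Mills' ratio bound when `δ` is small and by a cruder estimate otherwise.
-/

open MeasureTheory ProbabilityTheory

/-- The Gaussian measure on `EuclideanSpace ℝ (Fin d)` with mean `m` and covariance
`σ²·I`: the pushforward, under the canonical measurable equivalence
`(Fin d → ℝ) ≃ᵐ EuclideanSpace ℝ (Fin d)`, of the product of the coordinate Gaussians
`gaussianReal (m i) σ²`. -/
noncomputable def gaussianEuclidean {d : ℕ} (m : EuclideanSpace ℝ (Fin d)) (v : NNReal) :
    Measure (EuclideanSpace ℝ (Fin d)) :=
  Measure.map (MeasurableEquiv.toLp 2 (Fin d → ℝ))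
    (Measure.pi fun i => gaussianReal (m i) v)

open Real Set Filter
open scoped NNReal ENNReal RealInnerProductSpace

lemma gaussianPDFReal_zero_one (x : ℝ) :
    gaussianPDFReal 0 1 x = (√(2 * π))⁻¹ * exp (-x ^ 2 / 2) := by
  simp [gaussianPDFReal]

lemma gaussianPDFReal_zero_one_le (x : ℝ) : gaussianPDFReal 0 1 x ≤ (√(2 * π))⁻¹ := by
  rw [gaussianPDFReal_zero_one]
  exact mul_le_of_le_one_right (by positivity) (exp_le_one_iff.2 (by nlinarith [sq_nonneg x]))

lemma integrable_mul_exp_neg_sq_div_two : Integrable fun x : ℝ => x * exp (-x ^ 2 / 2) := by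
  convert integrable_mul_exp_neg_mul_sq (b := 1 / 2) (by norm_num) using 4
  ring

lemma integral_Ioi_mul_exp_neg_sq_div_two (t : ℝ) :
    ∫ x in Ioi t, x * exp (-x ^ 2 / 2) = exp (-t ^ 2 / 2) := by
  have hderiv (x : ℝ) : HasDerivAt (fun y => -exp (-y ^ 2 / 2)) (x * exp (-x ^ 2 / 2)) x := by
    have h : HasDerivAt (fun y : ℝ => -y ^ 2 / 2) (-(2 * x) / 2) x := by
      simpa using (hasDerivAt_pow 2 x).neg.div_const 2
    exact h.exp.neg.congr_deriv (by ring)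
  have hlim : Tendsto (fun y : ℝ => -exp (-y ^ 2 / 2)) atTop (nhds (-0)) :=
    (tendsto_exp_atBot.comp ((tendsto_neg_atTop_atBot.comp
      (tendsto_pow_atTop two_ne_zero)).atBot_div_const two_pos)).neg
  rw [integral_Ioi_of_hasDerivAt_of_tendsto' (fun x _ => hderiv x)
    integrable_mul_exp_neg_sq_div_two.integrableOn hlim]
  ring

lemma gaussianReal_Ioi_le_exp_div {t : ℝ} (ht : 0 < t) :
    gaussianReal 0 1 (Ioi t) ≤ ENNReal.ofReal (exp (-t ^ 2 / 2) / (√(2 * π) * t)) := by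
  rw [gaussianReal_apply_eq_integral _ one_ne_zero]
  refine ENNReal.ofReal_le_ofReal ?_
  calc ∫ x in Ioi t, gaussianPDFReal 0 1 x
      ≤ ∫ x in Ioi t, (√(2 * π) * t)⁻¹ * (x * exp (-x ^ 2 / 2)) := by
        refine setIntegral_mono_on (integrable_gaussianPDFReal 0 1).integrableOn
          (integrable_mul_exp_neg_sq_div_two.const_mul _).integrableOn measurableSet_Ioi
          fun x hx => ?_
        rw [gaussianPDFReal_zero_one, mul_inv, mul_assoc, ← mul_assoc t⁻¹]
        gcongr
        exact le_mul_of_one_le_left (exp_pos _).le ((one_le_inv_mul₀ ht).2 (mem_Ioi.1 hx).le)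
    _ = exp (-t ^ 2 / 2) / (√(2 * π) * t) := by
        rw [integral_const_mul, integral_Ioi_mul_exp_neg_sq_div_two, inv_mul_eq_div]

lemma gaussianReal_Ioi_zero : gaussianReal 0 1 (Ioi 0) = 1 / 2 := by
  have := nullSingletonClass_gaussianReal (μ := 0) one_ne_zero
  have hsymm : gaussianReal 0 1 (Iio 0) = gaussianReal 0 1 (Ioi 0) := by
    conv_lhs => rw [← neg_zero, ← gaussianReal_map_neg]
    rw [Measure.map_apply measurable_neg measurableSet_Iio]
    simp
  have htotal : gaussianReal 0 1 (Iio 0) + gaussianReal 0 1 (Ioi 0) = 1 := by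
    rw [← measure_union (Iio_disjoint_Ioi_of_le le_rfl) measurableSet_Ioi, Iio_union_Ioi,
      measure_compl (measurableSet_singleton 0) (measure_ne_top _ _), measure_singleton,
      measure_univ, tsub_zero]
  rw [hsymm, ← two_mul] at htotal
  rw [ENNReal.eq_div_iff two_ne_zero ENNReal.ofNat_ne_top, htotal]

lemma gaussianReal_Ioi_neg_le {s : ℝ} (hs : 0 ≤ s) :
    gaussianReal 0 1 (Ioi (-s)) ≤ ENNReal.ofReal (1 / 2 + s / √(2 * π)) := by
  calc gaussianReal 0 1 (Ioi (-s))
      ≤ gaussianReal 0 1 (Ioc (-s) 0) + gaussianReal 0 1 (Ioi 0) := by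
        rw [← Ioc_union_Ioi_eq_Ioi (neg_nonpos.2 hs)]
        exact measure_union_le _ _
    _ ≤ ENNReal.ofReal (s / √(2 * π)) + ENNReal.ofReal (1 / 2) := by
        gcongr
        · rw [gaussianReal_apply_eq_integral _ one_ne_zero]
          refine ENNReal.ofReal_le_ofReal ?_
          calc ∫ x in Ioc (-s) 0, gaussianPDFReal 0 1 x ≤ ∫ _ in Ioc (-s) 0, (√(2 * π))⁻¹ :=
                setIntegral_mono_on (integrable_gaussianPDFReal 0 1).integrableOn
                  (integrableOn_const measure_Ioc_lt_top.ne) measurableSet_Ioc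
                  fun x _ => gaussianPDFReal_zero_one_le x
            _ = s / √(2 * π) := by simp [measureReal_def, hs, div_eq_mul_inv]
        · rw [gaussianReal_Ioi_zero, ENNReal.ofReal_div_of_pos two_pos]
          simp
    _ = ENNReal.ofReal (1 / 2 + s / √(2 * π)) := by
        rw [add_comm, ENNReal.ofReal_add (by positivity) (by positivity)]

lemma two_point_five_lt_sqrt_two_pi : 2.5 < √(2 * π) := by
  rw [lt_sqrt (by norm_num)]
  linarith [pi_gt_d2]

lemma gaussianReal_Ioi_le_five_eighths {c t : ℝ} (hc : 0.63 < c) (ht : c - 1 / (2 * c) ≤ t) :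
    gaussianReal 0 1 (Ioi t) ≤ ENNReal.ofReal (5 / 8) := by
  have ht_low : -0.17 ≤ t := by
    refine le_trans ?_ ht
    rw [le_sub_iff_add_le, ← le_sub_iff_add_le', div_le_iff₀ (by positivity)]
    nlinarith
  calc gaussianReal 0 1 (Ioi t) ≤ gaussianReal 0 1 (Ioi (-0.17)) :=
        measure_mono (Ioi_subset_Ioi ht_low)
    _ ≤ ENNReal.ofReal (1 / 2 + 0.17 / √(2 * π)) := gaussianReal_Ioi_neg_le (by norm_num)
    _ ≤ ENNReal.ofReal (5 / 8) := by
        refine ENNReal.ofReal_le_ofReal ?_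
        have : 0.17 / √(2 * π) ≤ 0.17 / 2.5 := by gcongr; exact two_point_five_lt_sqrt_two_pi.le
        linarith

lemma gaussianReal_Ioi_le_of_log_two_le {L c t : ℝ} (hL : log 2 ≤ L) (hc : c = √(2 * L))
    (ht : c - 1 / (2 * c) ≤ t) :
    gaussianReal 0 1 (Ioi t) ≤ ENNReal.ofReal (1.25 * exp (-L)) := by
  have hc_sq : c ^ 2 = 2 * L := by rw [hc, sq_sqrt (by linarith [log_two_gt_d9])]
  have hc_big : 1.17 < c := by nlinarith [log_two_gt_d9, sqrt_nonneg (2 * L)]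
  have h_thr : 0.7 ≤ c - 1 / (2 * c) := by
    rw [le_sub_iff_add_le, ← le_sub_iff_add_le', div_le_iff₀ (by positivity)]
    nlinarith
  have ht_pos : 0.7 ≤ t := h_thr.trans ht
  have h_sq : 2 * L - 1 ≤ t ^ 2 := by
    have h : (c - 1 / (2 * c)) ^ 2 ≤ t ^ 2 := pow_le_pow_left₀ (by linarith) ht 2
    have : (c - 1 / (2 * c)) ^ 2 = c ^ 2 - 1 + 1 / (4 * c ^ 2) := by field_simp; ring
    nlinarith [one_div_pos.2 (by positivity : 0 < 4 * c ^ 2)]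
  have h_half : exp (1 / 2) ≤ 2 := by
    have := exp_bound_div_one_sub_of_interval (x := 1 / 2) (by norm_num) (by norm_num)
    norm_num at this ⊢
    linarith
  have hexp : exp (-t ^ 2 / 2) ≤ 2 * exp (-L) :=
    calc exp (-t ^ 2 / 2) ≤ exp (1 / 2 + -L) := exp_le_exp.2 (by linarith)
      _ = exp (1 / 2) * exp (-L) := exp_add _ _
      _ ≤ 2 * exp (-L) := by gcongr
  have h_denom : 1.75 ≤ √(2 * π) * t := by nlinarith [two_point_five_lt_sqrt_two_pi]
  refine (gaussianReal_Ioi_le_exp_div (by linarith)).trans (ENNReal.ofReal_le_ofReal ?_)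
  rw [div_le_iff₀ (by positivity)]
  calc exp (-t ^ 2 / 2) ≤ 2 * exp (-L) := hexp
    _ ≤ 1.25 * exp (-L) * 1.75 := by nlinarith [exp_pos (-L)]
    _ ≤ 1.25 * exp (-L) * (√(2 * π) * t) := by gcongr

/-- With `c = √(2 log (1.25 / δ))` and `δ = 1.25 e^{-c²/2}`: for `δ ≤ 5/8` the threshold is at
least `0.7` and Mills' bound applies; otherwise it is at least `-0.17` because `δ < 1`. -/
lemma gaussianReal_Ioi_le_of_sqrt_log_le {δ t : ℝ} (hδ : 0 < δ) (hδ1 : δ < 1) {c : ℝ}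
    (hc : c = √(2 * log (1.25 / δ))) (ht : c - 1 / (2 * c) ≤ t) :
    gaussianReal 0 1 (Ioi t) ≤ ENNReal.ofReal δ := by
  rcases le_or_gt δ (5 / 8) with hδ_small | hδ_large
  · have hL : log 2 ≤ log (1.25 / δ) := log_le_log two_pos (by rw [le_div_iff₀ hδ]; linarith)
    convert gaussianReal_Ioi_le_of_log_two_le hL hc ht using 2
    rw [exp_neg, exp_log (by positivity)]
    field_simp
  · have hL : 1 / 5 < log (1.25 / δ) := by
      have h : exp (1 / 5) ≤ 1.25 := by
        have := exp_bound_div_one_sub_of_interval (x := 1 / 5) (by norm_num) (by norm_num)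
        norm_num at this ⊢
        linarith
      rw [lt_log_iff_exp_lt (by positivity)]
      exact h.trans_lt ((lt_div_iff₀ hδ).2 (by linarith))
    have hc_low : 0.63 < c := by
      rw [hc, lt_sqrt (by norm_num)]
      linarith
    exact (gaussianReal_Ioi_le_five_eighths hc_low ht).trans
      (ENNReal.ofReal_le_ofReal hδ_large.le)

lemma MeasureTheory.Measure.pi_withDensity {ι : Type*} [Fintype ι] {X : ι → Type*}
    [∀ i, MeasurableSpace (X i)] (μ : ∀ i, Measure (X i)) [∀ i, IsProbabilityMeasure (μ i)]
    {f : ∀ i, X i → ℝ≥0∞} (hf : ∀ i, Measurable (f i))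
    [∀ i, SigmaFinite ((μ i).withDensity (f i))] :
    Measure.pi (fun i => (μ i).withDensity (f i))
      = (Measure.pi μ).withDensity fun x => ∏ i, f i (x i) := by
  refine Measure.pi_eq fun s hs => ?_
  have hbox : (univ.pi s).indicator (fun x => ∏ i, f i (x i))
      = fun x => ∏ i, (s i).indicator (f i) (x i) := by
    ext x
    by_cases hx : x ∈ univ.pi s
    · rw [indicator_of_mem hx]
      exact Finset.prod_congr rfl fun i _ => (indicator_of_mem (hx i (mem_univ i)) _).symm
    · obtain ⟨i, hi⟩ : ∃ i, x i ∉ s i := by simpa [mem_univ_pi] using hx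
      rw [indicator_of_notMem hx]
      exact (Finset.prod_eq_zero (Finset.mem_univ i) (indicator_of_notMem hi _)).symm
  rw [withDensity_apply _ (.univ_pi hs), ← lintegral_indicator (.univ_pi hs), hbox,
    lintegral_prod_eq_prod_lintegral_of_indepFun _ _
      (iIndepFun_pi fun i => ((hf i).indicator (hs i)).aemeasurable)
      fun i => ((hf i).indicator (hs i)).comp (measurable_pi_apply i)]
  refine Finset.prod_congr rfl fun i _ => ?_
  rw [(measurePreserving_eval μ i).lintegral_comp ((hf i).indicator (hs i)),
    lintegral_indicator (hs i), withDensity_apply _ (hs i)]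

lemma MeasurableEquiv.map_withDensity {α β : Type*} [MeasurableSpace α] [MeasurableSpace β]
    (e : α ≃ᵐ β) (μ : Measure α) (f : α → ℝ≥0∞) :
    (μ.withDensity f).map e = (μ.map e).withDensity (f ∘ e.symm) := by
  ext s hs
  rw [Measure.map_apply e.measurable hs, withDensity_apply _ (e.measurable hs),
    withDensity_apply _ hs, e.restrict_map, lintegral_map_equiv]
  simp

lemma MeasureTheory.withDensity_apply_le_mul_add {α : Type*} [MeasurableSpace α]
    (ν : Measure α) {g : α → ℝ≥0∞} (hg : Measurable g) (c : ℝ≥0∞) {s : Set α}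
    (hs : MeasurableSet s) :
    ν.withDensity g s ≤ c * ν s + ν.withDensity g {x | c < g x} := by
  have hle : MeasurableSet (s ∩ {x | g x ≤ c}) := hs.inter (measurableSet_le hg measurable_const)
  calc ν.withDensity g s
      ≤ ν.withDensity g (s ∩ {x | g x ≤ c}) + ν.withDensity g (s \ {x | g x ≤ c}) :=
        measure_le_inter_add_sdiff _ _ _
    _ ≤ c * ν s + ν.withDensity g {x | c < g x} := by
        gcongr
        · rw [withDensity_apply _ hle]
          calc ∫⁻ x in s ∩ {x | g x ≤ c}, g x ∂ν ≤ ∫⁻ _ in s ∩ {x | g x ≤ c}, c ∂ν :=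
                setLIntegral_mono measurable_const fun x hx => hx.2
            _ ≤ c * ν s := by
                rw [setLIntegral_const]
                gcongr
                exact inter_subset_left
        · exact fun x hx => show c < g x from not_le.1 hx.2

lemma gaussianReal_eq_withDensity (m₁ m₂ : ℝ) {v : ℝ≥0} (hv : v ≠ 0) :
    gaussianReal m₁ v = (gaussianReal m₂ v).withDensity
      fun x => ENNReal.ofReal (exp (((x - m₂) ^ 2 - (x - m₁) ^ 2) / (2 * v))) := by
  rw [gaussianReal_of_var_ne_zero _ hv, gaussianReal_of_var_ne_zero _ hv,
    ← withDensity_mul _ (measurable_gaussianPDF _ _) (by fun_prop)]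
  congr 1 with x
  rw [Pi.mul_apply, gaussianPDF, gaussianPDF, ← ENNReal.ofReal_mul (gaussianPDFReal_nonneg _ _ _),
    gaussianPDFReal, gaussianPDFReal, mul_assoc _ (exp _), ← exp_add]
  congr 3
  ring

lemma gaussianReal_eq_map_gaussianReal_zero_one (m : ℝ) (v : ℝ≥0) :
    gaussianReal m v = (gaussianReal 0 1).map fun z => m + √v * z := by
  change _ = (gaussianReal 0 1).map ((fun y => m + y) ∘ fun z => √v * z)
  rw [← Measure.map_map (by fun_prop) (by fun_prop), gaussianReal_map_const_mul,
    gaussianReal_map_const_add]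
  congr 1
  · simp
  · ext; simp

lemma gaussianReal_Ioi_mul {v : ℝ≥0} {s : ℝ} (hs : 0 < s) (hv : (v : ℝ) = s ^ 2) (τ : ℝ) :
    gaussianReal 0 v (Ioi (s * τ)) = gaussianReal 0 1 (Ioi τ) := by
  rw [gaussianReal_eq_map_gaussianReal_zero_one 0,
    Measure.map_apply (by fun_prop) measurableSet_Ioi, hv, sqrt_sq hs.le]
  congr 1 with z
  simp [hs, hs.ne']

lemma stdGaussian_map_inner {E : Type*} [NormedAddCommGroup E] [InnerProductSpace ℝ E]
    [FiniteDimensional ℝ E] [MeasurableSpace E] [BorelSpace E] (u : E) :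
    (stdGaussian E).map (fun x => ⟪u, x⟫) = gaussianReal 0 (‖u‖₊ ^ 2) := by
  have := IsGaussian.map_eq_gaussianReal (μ := stdGaussian E) (innerSL ℝ u)
  rw [integral_strongDual_stdGaussian, variance_dual_stdGaussian, innerSL_apply_norm] at this
  convert this using 2
  · rfl
  · rw [← coe_nnnorm, ← NNReal.coe_pow, Real.toNNReal_coe]

lemma gaussianEuclidean_eq_map_stdGaussian {d : ℕ} (m : EuclideanSpace ℝ (Fin d)) (v : ℝ≥0) :
    gaussianEuclidean m v = (stdGaussian _).map fun z => m + √v • z := by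
  rw [gaussianEuclidean, funext fun i => gaussianReal_eq_map_gaussianReal_zero_one (m i) v,
    ← Measure.pi_map_pi (fun _ => by fun_prop), ← map_pi_eq_stdGaussian,
    Measure.map_map (by fun_prop) (by fun_prop), Measure.map_map (by fun_prop) (by fun_prop)]
  rfl

lemma gaussianEuclidean_map_inner_sub {d : ℕ} (m u : EuclideanSpace ℝ (Fin d)) (v : ℝ≥0) :
    (gaussianEuclidean m v).map (fun x => ⟪u, x - m⟫) = gaussianReal 0 (‖u‖₊ ^ 2 * v) := by
  rw [gaussianEuclidean_eq_map_stdGaussian, Measure.map_map (by fun_prop) (by fun_prop)]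
  have : (fun x => ⟪u, x - m⟫) ∘ (fun z => m + √v • z) = (fun y => √v * y) ∘ fun z => ⟪u, z⟫ := by
    ext z; simp [inner_smul_right]
  rw [this, ← Measure.map_map (by fun_prop) (by fun_prop), stdGaussian_map_inner,
    gaussianReal_map_const_mul]
  congr 1
  · simp
  · ext; simp [mul_comm]

/-- The privacy loss: the log of the density ratio of `N(a, v I)` to `N(b, v I)` at `x`. -/
noncomputable def gaussianLlr {E : Type*} [NormedAddCommGroup E] (a b : E) (v : ℝ) (x : E) : ℝ :=
  (‖x - b‖ ^ 2 - ‖x - a‖ ^ 2) / (2 * v)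

lemma gaussianLlr_eq {E : Type*} [NormedAddCommGroup E] [InnerProductSpace ℝ E] (a b : E) (v : ℝ)
    (x : E) : gaussianLlr a b v x = (⟪a - b, x - a⟫ + ‖a - b‖ ^ 2 / 2) / v := by
  rw [gaussianLlr, show x - b = (x - a) + (a - b) by abel, norm_add_sq_real, real_inner_comm]
  by_cases hv : v = 0
  · simp [hv]
  · field_simp
    ring

lemma gaussianEuclidean_eq_withDensity {d : ℕ} (a b : EuclideanSpace ℝ (Fin d)) {v : ℝ≥0}
    (hv : v ≠ 0) :
    gaussianEuclidean a v =
      (gaussianEuclidean b v).withDensity fun x => ENNReal.ofReal (exp (gaussianLlr a b v x)) := by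
  rw [gaussianEuclidean, gaussianEuclidean,
    funext fun i => gaussianReal_eq_withDensity (a i) (b i) hv,
    Measure.pi_withDensity _ fun i => by fun_prop, MeasurableEquiv.map_withDensity]
  congr 1 with x
  rw [Function.comp_apply, ← ENNReal.ofReal_prod_of_nonneg fun i _ => (exp_pos _).le, ← exp_sum,
    ← Finset.sum_div, Finset.sum_sub_distrib, gaussianLlr, EuclideanSpace.real_norm_sq_eq,
    EuclideanSpace.real_norm_sq_eq]
  rfl

lemma gaussianEuclidean_setOf_lt_gaussianLlr_le {d : ℕ} (a b : EuclideanSpace ℝ (Fin d))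
    {ε δ σ : ℝ} {v : ℝ≥0} (hε : 0 < ε) (hε1 : ε ≤ 1) (hδ : 0 < δ) (hδ1 : δ < 1) (hσ : 0 < σ)
    (hv : (v : ℝ) = σ ^ 2) (h : ‖a - b‖ * √(2 * log (1.25 / δ)) ≤ σ * ε) :
    gaussianEuclidean a v {x | ε < gaussianLlr a b v x} ≤ ENNReal.ofReal δ := by
  rcases eq_or_ne a b with rfl | hab
  · simp [gaussianLlr, hε.not_gt]
  set ρ := ‖a - b‖ with hρ_def
  set c := √(2 * log (1.25 / δ)) with hc
  have hρ : 0 < ρ := norm_pos_iff.2 (sub_ne_zero.2 hab)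
  have hc_pos : 0 < c := sqrt_pos.2 (mul_pos two_pos (log_pos ((lt_div_iff₀ hδ).2 (by linarith))))
  have hset : {x | ε < gaussianLlr a b v x}
      = (fun x => ⟪a - b, x - a⟫) ⁻¹' Ioi (ρ * σ * (ε * σ / ρ - ρ / (2 * σ))) := by
    ext x
    rw [mem_ofPred_eq, gaussianLlr_eq, hv, lt_div_iff₀ (by positivity), mem_preimage, mem_Ioi]
    constructor <;> intro hx <;> field_simp at hx ⊢ <;> linarith
  have hvar : ((‖a - b‖₊ ^ 2 * v : ℝ≥0) : ℝ) = (ρ * σ) ^ 2 := by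
    simp only [NNReal.coe_mul, NNReal.coe_pow, coe_nnnorm, hv, hρ_def]
    ring
  rw [hset, ← Measure.map_apply (by fun_prop) measurableSet_Ioi, gaussianEuclidean_map_inner_sub,
    gaussianReal_Ioi_mul (by positivity) hvar]
  refine gaussianReal_Ioi_le_of_sqrt_log_le hδ hδ1 hc (sub_le_sub ?_ ?_)
  · rw [le_div_iff₀ hρ]
    linarith
  · rw [div_le_div_iff₀ (by positivity) (by positivity)]
    nlinarith

lemma gaussianEuclidean_apply_le_exp_mul_add {d : ℕ} (a b : EuclideanSpace ℝ (Fin d))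
    {ε δ σ : ℝ} {v : ℝ≥0} (hε : 0 < ε) (hε1 : ε ≤ 1) (hδ : 0 < δ) (hδ1 : δ < 1) (hσ : 0 < σ)
    (hv : (v : ℝ) = σ ^ 2) (h : ‖a - b‖ * √(2 * log (1.25 / δ)) ≤ σ * ε)
    {T : Set (EuclideanSpace ℝ (Fin d))} (hT : MeasurableSet T) :
    gaussianEuclidean a v T
      ≤ ENNReal.ofReal (exp ε) * gaussianEuclidean b v T + ENNReal.ofReal δ := by
  have hv0 : v ≠ 0 := by
    rintro rfl
    exact hσ.ne' (pow_eq_zero_iff two_ne_zero |>.1 (by simpa using hv.symm))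
  have key := withDensity_apply_le_mul_add (gaussianEuclidean b v)
    (g := fun x => ENNReal.ofReal (exp (gaussianLlr a b v x))) (by unfold gaussianLlr; fun_prop)
    (ENNReal.ofReal (exp ε)) hT
  rw [← gaussianEuclidean_eq_withDensity a b hv0] at key
  refine key.trans (add_le_add_right ?_ _)
  simp only [ENNReal.ofReal_lt_ofReal_iff_of_nonneg (exp_pos ε).le, exp_lt_exp]
  exact gaussianEuclidean_setOf_lt_gaussianLlr_le a b hε hε1 hδ hδ1 hσ hv h

theorem gaussian_mechanism_certified_unlearning_general
    {d : ℕ}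
    (wt wtstar : EuclideanSpace ℝ (Fin d))
    (Δ ε δ σ : ℝ)
    (hdist : ‖wt - wtstar‖ ≤ Δ)
    (hε : 0 < ε) (hε1 : ε < 1) (hδ : 0 < δ) (hδ1 : δ < 1)
    (hσpos : 0 < σ)
    (hσ : (Δ / ε) * Real.sqrt (2 * Real.log (1.25 / δ)) ≤ σ) :
    ∀ T : Set (EuclideanSpace ℝ (Fin d)), MeasurableSet T →
      gaussianEuclidean wt ⟨σ ^ 2, sq_nonneg σ⟩ T ≤
          ENNReal.ofReal (Real.exp ε) * gaussianEuclidean wtstar ⟨σ ^ 2, sq_nonneg σ⟩ T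
            + ENNReal.ofReal δ ∧
        gaussianEuclidean wtstar ⟨σ ^ 2, sq_nonneg σ⟩ T ≤
          ENNReal.ofReal (Real.exp ε) * gaussianEuclidean wt ⟨σ ^ 2, sq_nonneg σ⟩ T
            + ENNReal.ofReal δ := by
  intro T hT
  have hsens : ‖wt - wtstar‖ * √(2 * log (1.25 / δ)) ≤ σ * ε := by
    rw [div_mul_eq_mul_div, div_le_iff₀ hε] at hσ
    exact (mul_le_mul_of_nonneg_right hdist (sqrt_nonneg _)).trans hσ
  exact ⟨gaussianEuclidean_apply_le_exp_mul_add wt wtstar hε hε1.le hδ hδ1 hσpos rfl hsens hT,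
    gaussianEuclidean_apply_le_exp_mul_add wtstar wt hε hε1.le hδ hδ1 hσpos rfl
      (by rwa [norm_sub_rev]) hT⟩

/-- (Theorem 2 / Gaussian mechanism) If `‖w̃ − w̃*‖ ≤ Δ`, `0 < ε < 1`, `0 < δ < 1`, and
`σ ≥ (Δ/ε)·√(2 ln(1.25/δ))`, then the spherical Gaussians with variance `σ²` centered at
`w̃` and at `w̃*` are `(ε, δ)`-indistinguishable: for every measurable set `T`,
`μ_{w̃}(T) ≤ e^ε μ_{w̃*}(T) + δ` and `μ_{w̃*}(T) ≤ e^ε μ_{w̃}(T) + δ`. -/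
theorem gaussian_mechanism_certified_unlearning
    {d : ℕ} (hd : 1 ≤ d)
    (wt wtstar : EuclideanSpace ℝ (Fin d))
    (Δ ε δ σ : ℝ)
    (hΔ : 0 < Δ) (hdist : ‖wt - wtstar‖ ≤ Δ)
    (hε : 0 < ε) (hε1 : ε < 1) (hδ : 0 < δ) (hδ1 : δ < 1)
    (hσpos : 0 < σ)
    (hσ : (Δ / ε) * Real.sqrt (2 * Real.log (1.25 / δ)) ≤ σ) :
    ∀ T : Set (EuclideanSpace ℝ (Fin d)), MeasurableSet T →
      gaussianEuclidean wt ⟨σ ^ 2, sq_nonneg σ⟩ T ≤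
          ENNReal.ofReal (Real.exp ε) * gaussianEuclidean wtstar ⟨σ ^ 2, sq_nonneg σ⟩ T
            + ENNReal.ofReal δ ∧
        gaussianEuclidean wtstar ⟨σ ^ 2, sq_nonneg σ⟩ T ≤
          ENNReal.ofReal (Real.exp ε) * gaussianEuclidean wt ⟨σ ^ 2, sq_nonneg σ⟩ T
            + ENNReal.ofReal δ :=
  gaussian_mechanism_certified_unlearning_general wt wtstar Δ ε δ σ hdist hε hε1 hδ hδ1 hσpos hσ
end
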